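/- (Superadditivity of S_m on the cone) For all λ, μ ∈ Γ_m, S_m(λ + μ) ≥ S_m(λ). -/

import Mathlib

/-!
Newton's inequalities `E_k E_{k+2} ≤ E_{k+1}²` for the normalized means `E_k = S_k / C(N, k)` of
`N` real numbers are proved as usual: the roots of the derivative of `∏ (X - aᵢ)` have the same
means (Rolle's theorem provides enough of them), which reduces to `k + 2 = N`, and passing to the
reciprocals `aᵢ⁻¹` reduces that case to `E_2 ≤ E_1²`, i.e. Cauchy–Schwarz. Since the binomial
coefficients are log-concave, also `S_k S_{k+2} ≤ S_{k+1}²`; this forbids `S_{m+1}(λ|i) ≤ 0` when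
`λ ∈ Γ_{m+2}` and `λ|i ∈ Γ_m`, so deleting a variable maps `Γ_{m+1}` into `Γ_m`.

Then, following Marcus and Lopes, `q_m = S_{m+1} / S_m` is superadditive on `Γ_{m+1}` and
`Γ_{m+1}` is closed under addition, by induction on `m`: Euler's identity gives
`(m + 2) q_{m+1}(λ) = S_1(λ) - ∑ᵢ λᵢ² / (q_m(λ|i) + λᵢ)`, where `S_1` is additive, the
denominators are positive and superadditive by induction, and
`(a + b)² / (A + B) ≤ a² / A + b² / B`.
Finally `S_m(λ + μ) = ∏_{k<m} q_k(λ + μ) ≥ ∏_{k<m} q_k(λ) = S_m(λ)`, as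
`q_k(λ + μ) ≥ q_k(λ) + q_k(μ) > q_k(λ) > 0`.
-/

open Finset

/-- The k-th elementary symmetric polynomial of n real variables. -/
noncomputable def S (n : ℕ) (k : ℕ) (lam : Fin n → ℝ) : ℝ :=
  ∑ A ∈ Finset.powersetCard k (Finset.univ : Finset (Fin n)), ∏ i ∈ A, lam i

/-- The Gårding cone Γ_m. -/
def GammaCone (n m : ℕ) : Set (Fin n → ℝ) :=
  {lam | ∀ k, 1 ≤ k → k ≤ m → 0 < S n k lam}

/-- Restricted elementary symmetric polynomial: the k-th elementary symmetric
polynomial of the variables with indices in T. -/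
noncomputable def SRes (n : ℕ) (T : Finset (Fin n)) (k : ℕ) (lam : Fin n → ℝ) : ℝ :=
  ∑ A ∈ Finset.powersetCard k T, ∏ i ∈ A, lam i

theorem Nat.choose_mul_choose_add_two_le_sq (n k : ℕ) :
    n.choose k * n.choose (k + 2) ≤ n.choose (k + 1) ^ 2 := by
  rcases lt_or_ge n (k + 2) with h | h
  · simp [Nat.choose_eq_zero_of_lt h]
  obtain ⟨d, rfl⟩ := Nat.exists_eq_add_of_le h
  have h₁ := Nat.choose_succ_right_eq (k + 2 + d) k
  have h₂ := Nat.choose_succ_right_eq (k + 2 + d) (k + 1)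
  rw [show k + 2 + d - k = d + 2 by omega] at h₁
  rw [show k + 2 + d - (k + 1) = d + 1 by omega] at h₂
  refine Nat.le_of_mul_le_mul_right (c := (d + 2) * (k + 2)) ?_ (by positivity)
  calc _ = (k + 2 + d).choose k * (d + 2) * ((k + 2 + d).choose (k + 2) * (k + 2)) := by ring
    _ = (k + 2 + d).choose (k + 1) ^ 2 * ((k + 1) * (d + 1)) := by rw [← h₁, h₂]; ring
    _ ≤ _ := Nat.mul_le_mul_left _ (by nlinarith)

namespace Multiset

section CommSemiring

variable {R : Type*} [CommSemiring R]

@[simp]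
theorem esymm_zero (s : Multiset R) : s.esymm 0 = 1 := by
  simp [esymm]

theorem esymm_cons_succ (a : R) (s : Multiset R) (k : ℕ) :
    (a ::ₘ s).esymm (k + 1) = s.esymm (k + 1) + a * s.esymm k := by
  simp only [esymm, powersetCard_cons, map_add, sum_add, map_map, Function.comp_def, prod_cons,
    sum_map_mul_left]

theorem esymm_eq_zero_of_card_lt {s : Multiset R} {k : ℕ} (h : card s < k) : s.esymm k = 0 := by
  simp [esymm, powersetCard_eq_empty _ h]

theorem esymm_card (s : Multiset R) : s.esymm (card s) = s.prod := by
  induction s using Multiset.induction with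
  | empty => simp
  | cons a s ih =>
    rw [card_cons, esymm_cons_succ, esymm_eq_zero_of_card_lt (Nat.lt_succ_self _), ih, prod_cons,
      zero_add]

theorem esymm_one (s : Multiset R) : s.esymm 1 = s.sum := by
  simp [esymm, powersetCard_one, map_map]

end CommSemiring

theorem esymm_one_sq {R : Type*} [CommRing R] (s : Multiset R) :
    s.esymm 1 ^ 2 = (s.map (· ^ 2)).sum + 2 * s.esymm 2 := by
  induction s using Multiset.induction with
  | empty => simp [esymm_eq_zero_of_card_lt (s := (0 : Multiset R)) (k := 1) (by simp),
      esymm_eq_zero_of_card_lt (s := (0 : Multiset R)) (k := 2) (by simp)]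
  | cons a s ih =>
    rw [esymm_cons_succ, esymm_cons_succ, esymm_zero, map_cons, sum_cons, esymm_one]
    rw [esymm_one] at ih
    linear_combination ih

theorem esymm_eq_prod_mul_esymm_map_inv {K : Type*} [Field K] {s : Multiset K}
    (hs : (0 : K) ∉ s) {j k : ℕ} (hjk : j + k = card s) :
    s.esymm j = s.prod * (s.map (·⁻¹)).esymm k := by
  induction s using Multiset.induction generalizing j k with
  | empty =>
    obtain ⟨rfl, rfl⟩ : j = 0 ∧ k = 0 := by simpa using hjk
    simp
  | cons a t ih =>
    have ha : a ≠ 0 := fun h ↦ hs (h ▸ mem_cons_self a t)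
    have ht : (0 : K) ∉ t := fun h ↦ hs (mem_cons_of_mem h)
    rw [card_cons] at hjk
    rcases k with _ | k
    · rw [add_zero] at hjk
      rw [hjk, esymm_zero, mul_one, ← card_cons, esymm_card]
    rw [map_cons, prod_cons, esymm_cons_succ, mul_add, mul_mul_mul_comm, mul_inv_cancel₀ ha,
      one_mul, ← ih ht (j := j) (k := k) (by omega)]
    rcases j with _ | j
    · rw [esymm_eq_zero_of_card_lt (s := t.map (·⁻¹)) (by simp; omega), mul_zero, esymm_zero,
        esymm_zero, zero_add]
    · rw [esymm_cons_succ, mul_assoc, ← ih ht (j := j) (k := k + 1) (by omega), add_comm]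

theorem sq_sum_le_card_mul_sum_sq (s : Multiset ℝ) :
    s.sum ^ 2 ≤ card s * (s.map (· ^ 2)).sum := by
  have h := _root_.sq_sum_le_card_mul_sum_sq (s := (Finset.univ : Finset s)) (f := fun x ↦ (x : ℝ))
  rwa [← sum_eq_sum_coe, card_univ, card_coe, sum_eq_multiset_sum, map_univ s (· ^ 2)] at h

noncomputable def esymmMean (s : Multiset ℝ) (k : ℕ) : ℝ :=
  s.esymm k / (card s).choose k

theorem esymm_eq_choose_mul_esymmMean {s : Multiset ℝ} {k : ℕ} (hk : k ≤ card s) :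
    s.esymm k = (card s).choose k * s.esymmMean k := by
  rw [esymmMean, mul_div_cancel₀]
  exact_mod_cast (Nat.choose_pos hk).ne'

theorem esymmMean_two_le_sq (s : Multiset ℝ) : s.esymmMean 2 ≤ s.esymmMean 1 ^ 2 := by
  rcases lt_or_ge (card s) 2 with hs | hs
  · rw [esymmMean, esymm_eq_zero_of_card_lt hs, zero_div]
    positivity
  have hN : (2 : ℝ) ≤ card s := by exact_mod_cast hs
  rw [esymmMean, esymmMean, Nat.cast_choose_two, Nat.choose_one_right, div_pow,
    div_le_div_iff₀ (by nlinarith) (by positivity)]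
  have hsq := esymm_one_sq s
  have hcs := sq_sum_le_card_mul_sum_sq s
  rw [← esymm_one] at hcs
  nlinarith [mul_le_mul_of_nonneg_left hcs (by positivity : (0 : ℝ) ≤ card s)]

theorem esymmMean_eq_prod_mul_esymmMean_map_inv {s : Multiset ℝ} (hs : (0 : ℝ) ∉ s) {j k : ℕ}
    (hjk : j + k = card s) : s.esymmMean j = s.prod * (s.map (·⁻¹)).esymmMean k := by
  rw [esymmMean, esymmMean, esymm_eq_prod_mul_esymm_map_inv hs hjk, card_map, ← hjk,
    Nat.choose_symm_add, mul_div_assoc]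

open Polynomial in
/-- `t` is the multiset of roots of the derivative of `∏ a ∈ s, (X - a)`. -/
theorem exists_card_eq_and_esymmMean_eq {s : Multiset ℝ} {M : ℕ} (hM : card s = M + 1) :
    ∃ t : Multiset ℝ, card t = M ∧ ∀ j ≤ M, t.esymmMean j = s.esymmMean j := by
  set p : ℝ[X] := (s.map fun a ↦ X - C a).prod
  have hp_deg : p.natDegree = M + 1 := by rw [natDegree_multiset_prod_X_sub_C_eq_card, hM]
  have hp_lead : p.leadingCoeff = 1 := monic_multiset_prod_of_monic _ _ fun a _ ↦ monic_X_sub_C a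
  set q := derivative p
  have hq_deg : q.natDegree = M := by rw [natDegree_derivative, hp_deg, Nat.add_sub_cancel]
  have hq_roots : card q.roots = M := by
    have hle : card q.roots ≤ M := hq_deg ▸ card_roots' q
    have hge : card p.roots ≤ card q.roots + 1 := card_roots_le_derivative p
    rw [roots_multiset_prod_X_sub_C, hM] at hge
    omega
  refine ⟨q.roots, hq_roots, fun j hj ↦ ?_⟩
  have hcoeff := coeff_derivative p (M - j)
  rw [coeff_eq_esymm_roots_of_card (hq_roots.trans hq_deg.symm) (hq_deg ▸ Nat.sub_le M j),
    prod_X_sub_C_coeff s (by omega), leadingCoeff_derivative, hp_lead, hp_deg, hq_deg, hM,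
    show M - (M - j) = j by omega, show M + 1 - (M - j + 1) = j by omega] at hcoeff
  rw [Nat.cast_sub hj, Nat.cast_add_one, one_mul] at hcoeff
  have h : ((M : ℝ) + 1) * q.roots.esymm j = (M - j + 1) * s.esymm j :=
    mul_left_cancel₀ (pow_ne_zero j (by norm_num : (-1 : ℝ) ≠ 0)) (by linear_combination hcoeff)
  have hchoose : (M.choose j : ℝ) * (M + 1) = (M + 1).choose j * (M - j + 1) := by
    have := Nat.choose_mul_succ_eq M j
    rw [show M + 1 - j = M - j + 1 by omega] at this
    exact_mod_cast this
  rw [esymmMean, esymmMean, hq_roots, hM, div_eq_div_iff (by exact_mod_cast (Nat.choose_pos hj).ne')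
    (by exact_mod_cast (Nat.choose_pos (by omega : j ≤ M + 1)).ne')]
  refine mul_right_cancel₀ (by positivity : (M : ℝ) + 1 ≠ 0) ?_
  linear_combination ((M + 1).choose j : ℝ) * h - s.esymm j * hchoose

@[simp]
theorem esymmMean_zero (s : Multiset ℝ) : s.esymmMean 0 = 1 := by
  simp [esymmMean]

theorem esymmMean_mul_esymmMean_le_sq_of_card_eq {s : Multiset ℝ} {i : ℕ} (hs : card s = i + 2) :
    s.esymmMean i * s.esymmMean (i + 2) ≤ s.esymmMean (i + 1) ^ 2 := by
  by_cases h0 : (0 : ℝ) ∈ s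
  · have : s.esymmMean (i + 2) = 0 := by
      rw [esymmMean, ← hs, esymm_card, prod_eq_zero h0, zero_div]
    rw [this, mul_zero]
    positivity
  have hinv {j k : ℕ} (h : j + k = card s) :=
    esymmMean_eq_prod_mul_esymmMean_map_inv h0 h
  rw [hinv (k := 2) (by omega), hinv (k := 0) (by omega), hinv (k := 1) (by omega),
    esymmMean_zero]
  have := esymmMean_two_le_sq (s.map (·⁻¹))
  calc _ = s.prod ^ 2 * (s.map (·⁻¹)).esymmMean 2 := by ring
    _ ≤ s.prod ^ 2 * (s.map (·⁻¹)).esymmMean 1 ^ 2 := by gcongr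
    _ = _ := by ring

/-- **Newton's inequalities.** -/
theorem esymmMean_mul_esymmMean_le_sq {s : Multiset ℝ} {i : ℕ} (hi : i + 2 ≤ card s) :
    s.esymmMean i * s.esymmMean (i + 2) ≤ s.esymmMean (i + 1) ^ 2 := by
  obtain ⟨d, hd⟩ := Nat.exists_eq_add_of_le hi
  induction d generalizing s with
  | zero => exact esymmMean_mul_esymmMean_le_sq_of_card_eq hd
  | succ d ih =>
    obtain ⟨t, ht, hmean⟩ := exists_card_eq_and_esymmMean_eq (M := i + 2 + d) hd
    rw [← hmean i (by omega), ← hmean (i + 1) (by omega), ← hmean (i + 2) (by omega)]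
    exact ih (by omega) ht

theorem esymm_mul_esymm_le_sq (s : Multiset ℝ) (i : ℕ) :
    s.esymm i * s.esymm (i + 2) ≤ s.esymm (i + 1) ^ 2 := by
  rcases lt_or_ge (card s) (i + 2) with hs | hs
  · rw [esymm_eq_zero_of_card_lt hs, mul_zero]
    positivity
  rw [esymm_eq_choose_mul_esymmMean (by omega), esymm_eq_choose_mul_esymmMean hs,
    esymm_eq_choose_mul_esymmMean (by omega)]
  set N := card s
  have hchoose : (N.choose i * N.choose (i + 2) : ℝ) ≤ N.choose (i + 1) ^ 2 := by
    exact_mod_cast Nat.choose_mul_choose_add_two_le_sq N i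
  calc _ = (N.choose i * N.choose (i + 2) : ℝ) * (s.esymmMean i * s.esymmMean (i + 2)) := by ring
    _ ≤ (N.choose i * N.choose (i + 2) : ℝ) * s.esymmMean (i + 1) ^ 2 := by
      gcongr
      exact esymmMean_mul_esymmMean_le_sq hs
    _ ≤ N.choose (i + 1) ^ 2 * s.esymmMean (i + 1) ^ 2 := by gcongr
    _ = _ := by ring

end Multiset

section SRes

variable {n : ℕ}

theorem sRes_eq_esymm (T : Finset (Fin n)) (k : ℕ) (v : Fin n → ℝ) :
    SRes n T k v = (T.val.map v).esymm k :=
  (Finset.esymm_map_val v T k).symm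

@[simp]
theorem sRes_zero (T : Finset (Fin n)) (v : Fin n → ℝ) : SRes n T 0 v = 1 := by
  simp [SRes]

theorem sRes_one (T : Finset (Fin n)) (v : Fin n → ℝ) : SRes n T 1 v = ∑ i ∈ T, v i := by
  rw [sRes_eq_esymm, Multiset.esymm_one, Finset.sum_map_val]

theorem sRes_one_add (T : Finset (Fin n)) (x y : Fin n → ℝ) :
    SRes n T 1 (x + y) = SRes n T 1 x + SRes n T 1 y := by
  simp only [sRes_one, Pi.add_apply, Finset.sum_add_distrib]

theorem sRes_eq_zero_of_card_lt {T : Finset (Fin n)} {k : ℕ} (h : T.card < k) (v : Fin n → ℝ) :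
    SRes n T k v = 0 := by
  rw [sRes_eq_esymm]
  exact Multiset.esymm_eq_zero_of_card_lt (by simpa using h)

theorem sRes_insert_succ {T : Finset (Fin n)} {i : Fin n} (hi : i ∉ T) (k : ℕ) (v : Fin n → ℝ) :
    SRes n (insert i T) (k + 1) v = SRes n T (k + 1) v + v i * SRes n T k v := by
  simp only [sRes_eq_esymm, Finset.insert_val_of_notMem hi, Multiset.map_cons,
    Multiset.esymm_cons_succ]

theorem sRes_succ_of_mem {T : Finset (Fin n)} {i : Fin n} (hi : i ∈ T) (k : ℕ) (v : Fin n → ℝ) :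
    SRes n T (k + 1) v = SRes n (T.erase i) (k + 1) v + v i * SRes n (T.erase i) k v := by
  rw [← sRes_insert_succ (Finset.notMem_erase i T), Finset.insert_erase hi]

theorem sRes_mul_sRes_le_sq (T : Finset (Fin n)) (k : ℕ) (v : Fin n → ℝ) :
    SRes n T k v * SRes n T (k + 2) v ≤ SRes n T (k + 1) v ^ 2 := by
  simp only [sRes_eq_esymm, Multiset.esymm_mul_esymm_le_sq]

/-- Euler's identity for the homogeneous polynomial `SRes n T (k + 1)`, whose partial derivative
in `v i` is `SRes n (T.erase i) k`. -/
theorem succ_mul_sRes_succ (T : Finset (Fin n)) (k : ℕ) (v : Fin n → ℝ) :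
    ((k : ℝ) + 1) * SRes n T (k + 1) v = ∑ i ∈ T, v i * SRes n (T.erase i) k v := by
  induction T using Finset.induction generalizing k with
  | empty => simp [sRes_eq_zero_of_card_lt (T := ∅) (k := k + 1) (by simp)]
  | @insert j U hj ih =>
    have herase : ∀ i ∈ U, (insert j U).erase i = insert j (U.erase i) := fun i hi ↦
      Finset.erase_insert_of_ne (by rintro rfl; exact hj hi)
    rw [Finset.sum_insert hj, Finset.erase_insert hj, Finset.sum_congr rfl fun i hi ↦ by
      rw [herase i hi], sRes_insert_succ hj]
    rcases k with _ | k
    · simp only [Nat.cast_zero, zero_add, sRes_one, sRes_zero, mul_one, one_mul]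
      ring
    have hjU : ∀ i ∈ U, j ∉ U.erase i := fun i _ h ↦ hj (Finset.mem_of_mem_erase h)
    have hsum : ∑ i ∈ U, v i * SRes n (insert j (U.erase i)) (k + 1) v
        = ∑ i ∈ U, v i * SRes n (U.erase i) (k + 1) v
          + v j * ∑ i ∈ U, v i * SRes n (U.erase i) k v := by
      rw [Finset.mul_sum, ← Finset.sum_add_distrib]
      refine Finset.sum_congr rfl fun i hi ↦ ?_
      rw [sRes_insert_succ (hjU i hi)]
      ring
    rw [hsum, ← ih, ← ih]
    push_cast
    ring

theorem add_two_mul_sRes_add_two (T : Finset (Fin n)) (k : ℕ) (v : Fin n → ℝ) :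
    ((k : ℝ) + 2) * SRes n T (k + 2) v
      = SRes n T 1 v * SRes n T (k + 1) v - ∑ i ∈ T, v i ^ 2 * SRes n (T.erase i) k v := by
  have hterm : ∀ i ∈ T, v i * SRes n (T.erase i) (k + 1) v
      = v i * SRes n T (k + 1) v - v i ^ 2 * SRes n (T.erase i) k v := fun i hi ↦ by
    rw [sRes_succ_of_mem hi k v]
    ring
  have h := succ_mul_sRes_succ T (k + 1) v
  rw [Finset.sum_congr rfl hterm, Finset.sum_sub_distrib, ← Finset.sum_mul, ← sRes_one] at h
  push_cast at h
  linear_combination h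

end SRes

section GardingCone

variable {n : ℕ}

/-- The Gårding cone of the variables indexed by `T`. Unlike in `GammaCone`, the condition is also
imposed for `k = 0`, where it holds trivially. -/
def gardingCone (T : Finset (Fin n)) (m : ℕ) : Set (Fin n → ℝ) :=
  {v | ∀ k ≤ m, 0 < SRes n T k v}

theorem gammaCone_eq_gardingCone_univ (m : ℕ) : GammaCone n m = gardingCone univ m := by
  ext v
  refine ⟨fun hv k hk ↦ ?_, fun hv k _ hk ↦ hv k hk⟩
  rcases k with _ | k
  · simp
  · exact hv (k + 1) (by omega) hk

theorem gardingCone_anti (T : Finset (Fin n)) : Antitone (gardingCone T) :=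
  fun _ _ hm _ hv k hk ↦ hv k (hk.trans hm)

theorem pos_of_mul_le_sq {a b c d : ℝ} (ha : 0 < a) (had : a * d ≤ b ^ 2)
    (h₁ : 0 < b + c * a) (h₂ : 0 < d + c * b) : 0 < b := by
  by_contra! hb
  nlinarith [mul_le_mul_of_nonneg_left (show -b ≤ c * a by linarith) (neg_nonneg.mpr hb)]

theorem erase_mem_gardingCone {T : Finset (Fin n)} {m : ℕ} {v : Fin n → ℝ}
    (hv : v ∈ gardingCone T (m + 1)) {i : Fin n} (hi : i ∈ T) :
    v ∈ gardingCone (T.erase i) m := by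
  induction m with
  | zero => intro k hk; simp [Nat.le_zero.mp hk]
  | succ m ih =>
    have hvm := ih (gardingCone_anti T (Nat.le_succ _) hv)
    intro k hk
    rcases Nat.lt_or_eq_of_le hk with hk | rfl
    · exact hvm k (by omega)
    -- Newton's inequality `S_m S_{m+2} ≤ S_{m+1}²` on `T.erase i` forbids `S_{m+1} ≤ 0` there
    refine pos_of_mul_le_sq (hvm m le_rfl) (sRes_mul_sRes_le_sq _ m v) (c := v i) ?_ ?_
    · rw [← sRes_succ_of_mem hi]; exact hv (m + 1) (by omega)
    · rw [← sRes_succ_of_mem hi]; exact hv (m + 2) le_rfl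

noncomputable def sResRatio (T : Finset (Fin n)) (k : ℕ) (v : Fin n → ℝ) : ℝ :=
  SRes n T (k + 1) v / SRes n T k v

theorem sRes_succ_eq_sResRatio_mul {T : Finset (Fin n)} {k : ℕ} {v : Fin n → ℝ}
    (h : SRes n T k v ≠ 0) : SRes n T (k + 1) v = sResRatio T k v * SRes n T k v :=
  (div_mul_cancel₀ _ h).symm

theorem sResRatio_pos {T : Finset (Fin n)} {k : ℕ} {v : Fin n → ℝ}
    (hv : v ∈ gardingCone T (k + 1)) : 0 < sResRatio T k v :=
  div_pos (hv (k + 1) le_rfl) (hv k (by omega))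

theorem sRes_succ_div_sRes_erase {T : Finset (Fin n)} {i : Fin n} (hi : i ∈ T) {k : ℕ}
    {v : Fin n → ℝ} (h : SRes n (T.erase i) k v ≠ 0) :
    SRes n T (k + 1) v / SRes n (T.erase i) k v = sResRatio (T.erase i) k v + v i := by
  rw [sRes_succ_of_mem hi, add_div, mul_div_cancel_right₀ _ h, sResRatio]

theorem sResRatio_erase_add_pos {T : Finset (Fin n)} {k : ℕ} {v : Fin n → ℝ}
    (hv : v ∈ gardingCone T (k + 1)) {i : Fin n} (hi : i ∈ T) :
    0 < sResRatio (T.erase i) k v + v i := by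
  have h := erase_mem_gardingCone hv hi k le_rfl
  rw [← sRes_succ_div_sRes_erase hi h.ne']
  exact div_pos (hv (k + 1) le_rfl) h

theorem add_two_mul_sResRatio_succ {T : Finset (Fin n)} {k : ℕ} {v : Fin n → ℝ}
    (hv : SRes n T (k + 1) v ≠ 0) (hvi : ∀ i ∈ T, SRes n (T.erase i) k v ≠ 0) :
    ((k : ℝ) + 2) * sResRatio T (k + 1) v
      = SRes n T 1 v - ∑ i ∈ T, v i ^ 2 / (sResRatio (T.erase i) k v + v i) := by
  rw [sResRatio, mul_div_assoc', add_two_mul_sRes_add_two, sub_div, mul_div_cancel_right₀ _ hv,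
    Finset.sum_div]
  congr 1
  refine Finset.sum_congr rfl fun i hi ↦ ?_
  rw [← sRes_succ_div_sRes_erase hi (hvi i hi), div_div_eq_mul_div]

theorem add_sq_div_le_of_add_le {a b A B Z : ℝ} (hA : 0 < A) (hB : 0 < B) (hZ : A + B ≤ Z) :
    (a + b) ^ 2 / Z ≤ a ^ 2 / A + b ^ 2 / B := by
  calc (a + b) ^ 2 / Z ≤ (a + b) ^ 2 / (A + B) := by gcongr
    _ ≤ a ^ 2 / A + b ^ 2 / B := by
      rw [div_add_div _ _ hA.ne' hB.ne', div_le_div_iff₀ (by positivity) (by positivity)]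
      nlinarith [sq_nonneg (a * B - b * A), mul_pos hA hB]

theorem add_mem_gardingCone_succ {T : Finset (Fin n)} {m : ℕ} {x y : Fin n → ℝ}
    (hx : x ∈ gardingCone T (m + 1)) (hy : y ∈ gardingCone T (m + 1))
    (hxy : x + y ∈ gardingCone T m)
    (hr : sResRatio T m x + sResRatio T m y ≤ sResRatio T m (x + y)) :
    x + y ∈ gardingCone T (m + 1) := by
  intro k hk
  rcases Nat.lt_or_eq_of_le hk with hk | rfl
  · exact hxy k (by omega)
  rw [sRes_succ_eq_sResRatio_mul (hxy m le_rfl).ne']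
  have := sResRatio_pos hx
  have := sResRatio_pos hy
  exact mul_pos (by linarith) (hxy m le_rfl)

theorem sResRatio_succ_add_le {m : ℕ}
    (ih : ∀ {T : Finset (Fin n)} {x y : Fin n → ℝ}, x ∈ gardingCone T (m + 1) →
      y ∈ gardingCone T (m + 1) →
      x + y ∈ gardingCone T (m + 1) ∧ sResRatio T m x + sResRatio T m y ≤ sResRatio T m (x + y))
    {T : Finset (Fin n)} {x y : Fin n → ℝ}
    (hx : x ∈ gardingCone T (m + 2)) (hy : y ∈ gardingCone T (m + 2)) :
    sResRatio T (m + 1) x + sResRatio T (m + 1) y ≤ sResRatio T (m + 1) (x + y) := by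
  have hx' := gardingCone_anti T (Nat.le_succ _) hx
  have hy' := gardingCone_anti T (Nat.le_succ _) hy
  have hz := (ih hx' hy').1
  have ih_erase {i} (hi : i ∈ T) := ih (erase_mem_gardingCone hx hi) (erase_mem_gardingCone hy hi)
  have hterm : ∀ i ∈ T, (x + y) i ^ 2 / (sResRatio (T.erase i) m (x + y) + (x + y) i)
      ≤ x i ^ 2 / (sResRatio (T.erase i) m x + x i)
        + y i ^ 2 / (sResRatio (T.erase i) m y + y i) := fun i hi ↦ by
    refine add_sq_div_le_of_add_le (sResRatio_erase_add_pos hx' hi)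
      (sResRatio_erase_add_pos hy' hi) ?_
    have := (ih_erase hi).2
    simp only [Pi.add_apply]
    linarith
  have hsum := Finset.sum_le_sum hterm
  rw [Finset.sum_add_distrib] at hsum
  have hS₁ := sRes_one_add T x y
  have hx₂ := add_two_mul_sResRatio_succ (hx' (m + 1) le_rfl).ne'
    fun i hi ↦ (erase_mem_gardingCone hx hi m (by omega)).ne'
  have hy₂ := add_two_mul_sResRatio_succ (hy' (m + 1) le_rfl).ne'
    fun i hi ↦ (erase_mem_gardingCone hy hi m (by omega)).ne'
  have hz₂ := add_two_mul_sResRatio_succ (hz (m + 1) le_rfl).ne'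
    fun i hi ↦ ((ih_erase hi).1 m (by omega)).ne'
  refine le_of_mul_le_mul_left ?_ (by positivity : (0 : ℝ) < m + 2)
  linarith

theorem add_mem_gardingCone_and_sResRatio_add_le (m : ℕ) {T : Finset (Fin n)}
    {x y : Fin n → ℝ} (hx : x ∈ gardingCone T (m + 1)) (hy : y ∈ gardingCone T (m + 1)) :
    x + y ∈ gardingCone T (m + 1) ∧
      sResRatio T m x + sResRatio T m y ≤ sResRatio T m (x + y) := by
  induction m generalizing T x y with
  | zero =>
    have hr : sResRatio T 0 x + sResRatio T 0 y = sResRatio T 0 (x + y) := by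
      simp only [sResRatio, sRes_zero, div_one, zero_add, sRes_one_add]
    exact ⟨add_mem_gardingCone_succ hx hy (by simp [gardingCone]) hr.le, hr.le⟩
  | succ m ih =>
    have hr := sResRatio_succ_add_le ih hx hy
    have hxy := (ih (gardingCone_anti T (Nat.le_succ _) hx)
      (gardingCone_anti T (Nat.le_succ _) hy)).1
    exact ⟨add_mem_gardingCone_succ hx hy hxy hr, hr⟩

theorem sRes_le_sRes_add {T : Finset (Fin n)} {m : ℕ} {x y : Fin n → ℝ}
    (hx : x ∈ gardingCone T m) (hy : y ∈ gardingCone T m) : SRes n T m x ≤ SRes n T m (x + y) := by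
  induction m with
  | zero => simp
  | succ m ih =>
    obtain ⟨hxy, hr⟩ := add_mem_gardingCone_and_sResRatio_add_le m hx hy
    have hx' := gardingCone_anti T (Nat.le_succ _) hx
    have hy' := gardingCone_anti T (Nat.le_succ _) hy
    rw [sRes_succ_eq_sResRatio_mul (hx m (by omega)).ne',
      sRes_succ_eq_sResRatio_mul (hxy m (by omega)).ne']
    exact mul_le_mul (by linarith [sResRatio_pos hy]) (ih hx' hy') (hx m (by omega)).le
      (sResRatio_pos hxy).le

end GardingCone

theorem stmt10_general (n m : ℕ) (lam mu : Fin n → ℝ)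
    (hlam : lam ∈ GammaCone n m) (hmu : mu ∈ GammaCone n m) :
    S n m lam ≤ S n m (lam + mu) := by
  rw [gammaCone_eq_gardingCone_univ] at hlam hmu
  exact sRes_le_sRes_add hlam hmu

theorem stmt10 (n m : ℕ) (hm : 1 ≤ m) (hmn : m ≤ n) (lam mu : Fin n → ℝ)
    (hlam : lam ∈ GammaCone n m) (hmu : mu ∈ GammaCone n m) :
    S n m lam ≤ S n m (lam + mu) :=
  stmt10_general n m lam mu hlam hmu
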